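/- Suppose (α_k)_{k∈ℕ} is a monotone nonincreasing sequence of positive step sizes, that there is G > 0 with E[‖∇f(x_k)‖²] ≤ G² for all k, and that for a given x ∈ H there is D > 0 with E[‖x_k − x‖²] ≤ D² for all k. Then for every integer K ≥ 1, (1/K) ∑_{k=0}^{K−1} V_k(x) ≤ (σ²/b + G²) · (1/(2K)) ∑_{k=0}^{K−1} α_k + D² / (2 K α_{K−1}). -/

import Mathlib

open MeasureTheory ProbabilityTheory Filter RealInnerProductSpace

/-!
Expanding the square in the update `x_{k+1} = x_k - α_k g_k` gives
`E‖x_{k+1} - x‖² = E‖x_k - x‖² - 2 α_k E⟪g_k, x_k - x⟫ + α_k² E‖g_k‖²`.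
As `x_k - x` is `𝓕_k`-measurable, conditioning on `𝓕_k` replaces `g_k` by `∇f(x_k)` in the cross
term, and the bias–variance identity `E‖g_k‖² = E‖g_k - ∇f(x_k)‖² + E‖∇f(x_k)‖² ≤ σ²/b + G²`
bounds the last one. Dividing by `2 α_k` and summing, the differences of `A_k = E‖x_k - x‖²`
weighted by the nondecreasing `1/α_k` telescope to at most `D²/α_{K-1}`.
-/

lemma integral_le_of_ae_condExp_le {Ω : Type*} {m m0 : MeasurableSpace Ω} {μ : Measure Ω}
    [IsProbabilityMeasure μ] (hm : m ≤ m0) {f : Ω → ℝ} {c : ℝ}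
    (hfc : ∀ᵐ ω ∂μ, μ[f|m] ω ≤ c) :
    ∫ ω, f ω ∂μ ≤ c := by
  rw [← integral_condExp hm]
  simpa using integral_mono_ae integrable_condExp (integrable_const c) hfc

section SecondMoments

variable {Ω H : Type*} {m m0 : MeasurableSpace Ω} {μ : Measure Ω}
  [NormedAddCommGroup H] [InnerProductSpace ℝ H]

lemma MeasureTheory.MemLp.integrable_inner {u v : Ω → H} (hu : MemLp u 2 μ) (hv : MemLp v 2 μ) :
    Integrable (fun ω => ⟪u ω, v ω⟫) μ :=
  (L2.integrable_inner (𝕜 := ℝ) (hu.toLp u) (hv.toLp v)).congr <| by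
    filter_upwards [hu.coeFn_toLp, hv.coeFn_toLp] with ω huω hvω
    rw [huω, hvω]

lemma integral_norm_sub_smul_sq {Y g : Ω → H} (hY : MemLp Y 2 μ) (hg : MemLp g 2 μ) (a : ℝ) :
    ∫ ω, ‖Y ω - a • g ω‖ ^ 2 ∂μ
      = ∫ ω, ‖Y ω‖ ^ 2 ∂μ - 2 * a * ∫ ω, ⟪Y ω, g ω⟫ ∂μ + a ^ 2 * ∫ ω, ‖g ω‖ ^ 2 ∂μ := by
  have hexpand : ∀ ω, ‖Y ω - a • g ω‖ ^ 2
      = ‖Y ω‖ ^ 2 - 2 * a * ⟪Y ω, g ω⟫ + a ^ 2 * ‖g ω‖ ^ 2 := fun ω => by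
    rw [norm_sub_sq_real, real_inner_smul_right, norm_smul, mul_pow, Real.norm_eq_abs, sq_abs]
    ring
  simp_rw [hexpand]
  rw [integral_add, integral_sub, integral_const_mul, integral_const_mul]
  · exact (memLp_two_iff_integrable_sq_norm hY.1).1 hY
  · exact (hY.integrable_inner hg).const_mul _
  · exact ((memLp_two_iff_integrable_sq_norm hY.1).1 hY).sub
      ((hY.integrable_inner hg).const_mul _)
  · exact ((memLp_two_iff_integrable_sq_norm hg.1).1 hg).const_mul _

variable [CompleteSpace H]

lemma integral_inner_eq_of_condExp_ae_eq [IsFiniteMeasure μ] (hm : m ≤ m0) {g v Y : Ω → H}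
    (hg : MemLp g 2 μ) (hgv : μ[g|m] =ᵐ[μ] v) (hY : MemLp Y 2 μ)
    (hYm : AEStronglyMeasurable[m] Y μ) :
    ∫ ω, ⟪g ω, Y ω⟫ ∂μ = ∫ ω, ⟪v ω, Y ω⟫ ∂μ := by
  have hcoe : ∀ {u w : Ω → H} (u' w' : Ω → H), u =ᵐ[μ] u' → w =ᵐ[μ] w' →
      ∫ ω, ⟪u ω, w ω⟫ ∂μ = ∫ ω, ⟪u' ω, w' ω⟫ ∂μ := fun _ _ hu hw =>
    integral_congr_ae <| by filter_upwards [hu, hw] with ω huω hwω; rw [huω, hwω]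
  calc ∫ ω, ⟪g ω, Y ω⟫ ∂μ
      = ⟪hg.toLp g, hY.toLp Y⟫ := by
        rw [L2.inner_def]; exact hcoe _ _ hg.coeFn_toLp.symm hY.coeFn_toLp.symm
    _ = ⟪(condExpL2 H ℝ hm (hg.toLp g) : Ω →₂[μ] H), hY.toLp Y⟫ :=
        (inner_condExpL2_eq_inner_fun hm _ _ (hYm.congr hY.coeFn_toLp.symm)).symm
    _ = ∫ ω, ⟪v ω, Y ω⟫ ∂μ := by
        rw [L2.inner_def]
        exact hcoe _ _ ((hg.condExpL2_ae_eq_condExp hm).trans hgv) hY.coeFn_toLp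

lemma integral_norm_sub_sq_of_condExp_ae_eq [IsFiniteMeasure μ] (hm : m ≤ m0) {g v : Ω → H}
    (hg : MemLp g 2 μ) (hgv : μ[g|m] =ᵐ[μ] v) :
    ∫ ω, ‖g ω - v ω‖ ^ 2 ∂μ = ∫ ω, ‖g ω‖ ^ 2 ∂μ - ∫ ω, ‖v ω‖ ^ 2 ∂μ := by
  have hv : MemLp v 2 μ := (hg.condExp one_le_two).ae_eq hgv
  have hvm : AEStronglyMeasurable[m] v μ :=
    stronglyMeasurable_condExp.aestronglyMeasurable.congr hgv
  have hcross : ∫ ω, ⟪g ω, v ω⟫ ∂μ = ∫ ω, ‖v ω‖ ^ 2 ∂μ := by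
    simp_rw [integral_inner_eq_of_condExp_ae_eq hm hg hgv hv hvm, real_inner_self_eq_norm_sq]
  have := integral_norm_sub_smul_sq hg hv 1
  simp only [one_smul, hcross] at this
  linarith

lemma two_mul_integral_inner_le_of_sgd_step [IsProbabilityMeasure μ] (hm : m ≤ m0)
    {X g v : Ω → H} (x' : H) (a s : ℝ) (hX : MemLp X 2 μ) (hXm : AEStronglyMeasurable[m] X μ)
    (hg : MemLp g 2 μ) (hgv : μ[g|m] =ᵐ[μ] v)
    (hvar : ∀ᵐ ω ∂μ, μ[fun ω => ‖g ω - v ω‖ ^ 2|m] ω ≤ s) :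
    2 * a * ∫ ω, ⟪v ω, X ω - x'⟫ ∂μ
      ≤ ∫ ω, ‖X ω - x'‖ ^ 2 ∂μ - ∫ ω, ‖X ω - a • g ω - x'‖ ^ 2 ∂μ
        + a ^ 2 * (s + ∫ ω, ‖v ω‖ ^ 2 ∂μ) := by
  have hY : MemLp (fun ω => X ω - x') 2 μ := hX.sub (memLp_const x')
  have hYm : AEStronglyMeasurable[m] (fun ω => X ω - x') μ :=
    hXm.sub aestronglyMeasurable_const
  have hdrift : ∫ ω, ⟪X ω - x', g ω⟫ ∂μ = ∫ ω, ⟪v ω, X ω - x'⟫ ∂μ := by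
    simp_rw [real_inner_comm (g _)]
    exact integral_inner_eq_of_condExp_ae_eq hm hg hgv hY hYm
  have hmoment : ∫ ω, ‖g ω‖ ^ 2 ∂μ ≤ s + ∫ ω, ‖v ω‖ ^ 2 ∂μ := by
    have := integral_le_of_ae_condExp_le hm hvar
    rw [integral_norm_sub_sq_of_condExp_ae_eq hm hg hgv] at this
    linarith
  have hexpand : ∫ ω, ‖X ω - a • g ω - x'‖ ^ 2 ∂μ
      = ∫ ω, ‖X ω - x'‖ ^ 2 ∂μ - 2 * a * ∫ ω, ⟪X ω - x', g ω⟫ ∂μ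
        + a ^ 2 * ∫ ω, ‖g ω‖ ^ 2 ∂μ := by
    refine (integral_congr_ae (ae_of_all _ fun ω => ?_)).trans (integral_norm_sub_smul_sq hY hg a)
    rw [sub_right_comm]
  rw [hexpand, hdrift]
  linarith [mul_le_mul_of_nonneg_left hmoment (sq_nonneg a)]

end SecondMoments

lemma sum_sub_div_add_le_of_antitone {A a : ℕ → ℝ} {M : ℝ} (ha : ∀ k, 0 < a k)
    (hanti : Antitone a) (hAM : ∀ k, A k ≤ M) (n : ℕ) :
    ∑ k ∈ Finset.range (n + 1), (A k - A (k + 1)) / a k + A (n + 1) / a n ≤ M / a n := by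
  induction n with
  | zero =>
    simp only [Finset.sum_range_one, zero_add, sub_div, sub_add_cancel]
    exact div_le_div_of_nonneg_right (hAM 0) (ha 0).le
  | succ n ih =>
    have hstep : (M - A (n + 1)) / a n ≤ (M - A (n + 1)) / a (n + 1) :=
      div_le_div_of_nonneg_left (by linarith [hAM (n + 1)]) (ha (n + 1)) (hanti n.le_succ)
    rw [Finset.sum_range_succ, sub_div _ _ (a (n + 1))]
    rw [sub_div, sub_div] at hstep
    linarith

lemma average_le_of_two_mul_le_sub_add {V A a : ℕ → ℝ} {C M : ℝ} (ha : ∀ k, 0 < a k)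
    (hanti : Antitone a) (hA0 : ∀ k, 0 ≤ A k) (hAM : ∀ k, A k ≤ M)
    (hstep : ∀ k, 2 * a k * V k ≤ A k - A (k + 1) + a k ^ 2 * C) (K : ℕ) (hK : 1 ≤ K) :
    (1 / (K : ℝ)) * ∑ k ∈ Finset.range K, V k
      ≤ C * ((1 / (2 * (K : ℝ))) * ∑ k ∈ Finset.range K, a k)
        + M / (2 * (K : ℝ) * a (K - 1)) := by
  obtain ⟨n, rfl⟩ : ∃ n, K = n + 1 := ⟨K - 1, by omega⟩
  have hV : ∀ k, V k ≤ ((A k - A (k + 1)) / a k + a k * C) / 2 := fun k => by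
    rw [le_div_iff₀ two_pos, ← sub_le_iff_le_add, le_div_iff₀ (ha k)]
    linarith [hstep k]
  have hsum : ∑ k ∈ Finset.range (n + 1), V k
      ≤ (M / a n + C * ∑ k ∈ Finset.range (n + 1), a k) / 2 := by
    have htel := sum_sub_div_add_le_of_antitone ha hanti hAM n
    have hlast : 0 ≤ A (n + 1) / a n := div_nonneg (hA0 _) (ha n).le
    calc ∑ k ∈ Finset.range (n + 1), V k
        ≤ ∑ k ∈ Finset.range (n + 1), ((A k - A (k + 1)) / a k + a k * C) / 2 :=
          Finset.sum_le_sum fun k _ => hV k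
      _ ≤ _ := by
          rw [← Finset.sum_div, Finset.sum_add_distrib, ← Finset.sum_mul, mul_comm C]
          gcongr
          linarith
  calc (1 / ((n + 1 : ℕ) : ℝ)) * ∑ k ∈ Finset.range (n + 1), V k
      ≤ (1 / ((n + 1 : ℕ) : ℝ)) * ((M / a n + C * ∑ k ∈ Finset.range (n + 1), a k) / 2) := by
        gcongr
    _ = _ := by
        rw [Nat.add_sub_cancel]
        field_simp
        ring

theorem rsgd_monotone_step_vi_sum_bound_general
    {Ω : Type*} [MeasureSpace Ω] [IsProbabilityMeasure (ℙ : Measure Ω)]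
    {H : Type*} [NormedAddCommGroup H] [InnerProductSpace ℝ H] [CompleteSpace H]
    (𝓕 : Filtration ℕ (inferInstance : MeasurableSpace Ω))
    (f : H → ℝ)
    (α : ℕ → ℝ) (hα : ∀ k, 0 < α k)
    (b : ℕ) (σ2 : ℝ)
    (g : ℕ → Ω → H)
    (hg_L2 : ∀ k, MemLp (g k) 2 ℙ)
    (x : ℕ → Ω → H)
    (hxrec : ∀ k, x (k + 1) = fun ω => x k ω - α k • g k ω)
    (hx_meas : ∀ k, StronglyMeasurable[𝓕 k] (x k))
    (hg_mean : ∀ k, condExp (𝓕 k) ℙ (g k) =ᵐ[ℙ] fun ω => gradient f (x k ω))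
    (hg_var : ∀ k, ∀ᵐ ω ∂ℙ,
      condExp (𝓕 k) ℙ (fun ω' => ‖g k ω' - gradient f (x k ω')‖ ^ 2) ω ≤ σ2 / b)
    (hx_int : ∀ k, Integrable (fun ω => ‖x k ω‖ ^ 2) ℙ)
    (hmono : Antitone α)
    (G : ℝ)
    (hGbound : ∀ k, (∫ ω, ‖gradient f (x k ω)‖ ^ 2 ∂ℙ) ≤ G ^ 2)
    (x' : H) (D : ℝ)
    (hDbound : ∀ k, (∫ ω, ‖x k ω - x'‖ ^ 2 ∂ℙ) ≤ D ^ 2) :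
    ∀ K : ℕ, 1 ≤ K →
      (1 / (K : ℝ)) * ∑ k ∈ Finset.range K,
          ∫ ω, ⟪gradient f (x k ω), x k ω - x'⟫ ∂ℙ
        ≤ (σ2 / b + G ^ 2) * ((1 / (2 * (K : ℝ))) * ∑ k ∈ Finset.range K, α k)
          + D ^ 2 / (2 * (K : ℝ) * α (K - 1)) := by
  refine average_le_of_two_mul_le_sub_add hα hmono (fun k => integral_nonneg fun _ => sq_nonneg _)
    hDbound fun k => ?_
  have hx_L2 : MemLp (x k) 2 ℙ :=
    (memLp_two_iff_integrable_sq_norm ((hx_meas k).mono (𝓕.le k)).aestronglyMeasurable).2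
      (hx_int k)
  have hstep := two_mul_integral_inner_le_of_sgd_step (𝓕.le k) x' (α k) (σ2 / b) hx_L2
    (hx_meas k).aestronglyMeasurable (hg_L2 k) (hg_mean k) (hg_var k)
  rw [hxrec k]
  linarith [mul_le_mul_of_nonneg_left (hGbound k) (sq_nonneg (α k))]

/-- Theorem 4 (second assertion) of the paper in the Euclidean/Hilbert setting
(`ζ(κ,c) = 1`, so `C₁ = 1/2` and `C₂ = D²/2`): for RSGD with monotone
nonincreasing positive step sizes, `E[‖∇f(x_k)‖²] ≤ G²`, and `E[‖x_k − x‖²] ≤ D²`,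
for every `K ≥ 1`,
`(1/K) ∑_{k<K} V_k(x) ≤ (σ²/b + G²) · (1/(2K)) ∑_{k<K} α_k + D²/(2Kα_{K−1})`. -/
theorem rsgd_monotone_step_vi_sum_bound
    {Ω : Type*} [MeasureSpace Ω] [IsProbabilityMeasure (ℙ : Measure Ω)]
    {H : Type*} [NormedAddCommGroup H] [InnerProductSpace ℝ H] [CompleteSpace H]
    (𝓕 : Filtration ℕ (inferInstance : MeasurableSpace Ω))
    (f : H → ℝ) (hf : ContDiff ℝ 1 f)
    (x₀ : H) (α : ℕ → ℝ) (hα : ∀ k, 0 < α k)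
    (b : ℕ) (hb : 1 ≤ b) (σ2 : ℝ) (hσ2 : 0 ≤ σ2)
    (g : ℕ → Ω → H)
    (hg_meas : ∀ k, StronglyMeasurable[𝓕 (k + 1)] (g k))
    (hg_L2 : ∀ k, MemLp (g k) 2 ℙ)
    (x : ℕ → Ω → H)
    (hx0 : x 0 = fun _ => x₀)
    (hxrec : ∀ k, x (k + 1) = fun ω => x k ω - α k • g k ω)
    (hx_meas : ∀ k, StronglyMeasurable[𝓕 k] (x k))
    (hg_mean : ∀ k, condExp (𝓕 k) ℙ (g k) =ᵐ[ℙ] fun ω => gradient f (x k ω))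
    (hg_var : ∀ k, ∀ᵐ ω ∂ℙ,
      condExp (𝓕 k) ℙ (fun ω' => ‖g k ω' - gradient f (x k ω')‖ ^ 2) ω ≤ σ2 / b)
    (hx_int : ∀ k, Integrable (fun ω => ‖x k ω‖ ^ 2) ℙ)
    (hgrad_int : ∀ k, Integrable (fun ω => ‖gradient f (x k ω)‖ ^ 2) ℙ)
    (hmono : Antitone α)
    (G : ℝ) (hG : 0 < G)
    (hGbound : ∀ k, (∫ ω, ‖gradient f (x k ω)‖ ^ 2 ∂ℙ) ≤ G ^ 2)
    (x' : H) (D : ℝ) (hD : 0 < D)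
    (hDbound : ∀ k, (∫ ω, ‖x k ω - x'‖ ^ 2 ∂ℙ) ≤ D ^ 2) :
    ∀ K : ℕ, 1 ≤ K →
      (1 / (K : ℝ)) * ∑ k ∈ Finset.range K,
          ∫ ω, ⟪gradient f (x k ω), x k ω - x'⟫ ∂ℙ
        ≤ (σ2 / b + G ^ 2) * ((1 / (2 * (K : ℝ))) * ∑ k ∈ Finset.range K, α k)
          + D ^ 2 / (2 * (K : ℝ) * α (K - 1)) :=
  rsgd_monotone_step_vi_sum_bound_general 𝓕 f α hα b σ2 g hg_L2 x hxrec hx_meas hg_mean hg_var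
    hx_int hmono G hGbound x' D hDbound
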